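/- Let (A, ∧, ∼, ∽, 1) be a pseudo equality algebra. Every state-morphism operator σ on A is an internal state of type I on A, i.e., σ satisfies (IS1), (IS2), (IS3) and (IS4). -/

import Mathlib

/-! The substance is (IS2): its two identities already hold in every pseudo equality algebra,
by comparing both sides through (A5) and the inequalities `y ≤ z ∼ (y ∽ z)`, `x ≤ (z ∼ x) ∽ z`
obtained from (A6) at `1`; since `σ` commutes with `∼` and `∽`, applying it to them gives (IS2).
(IS1), (IS3) and (IS4) follow from meet preservation and idempotence. -/

/-- A pseudo equality algebra (JK-algebra): a meet-semilattice with top element `⊤`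
(playing the role of `1`) equipped with two equality operations `sim` (`∼`) and
`bsim` (`∽`) satisfying axioms (A2)–(A7). -/
class PseudoEqualityAlgebra (A : Type*) extends SemilatticeInf A, OrderTop A where
  sim : A → A → A
  bsim : A → A → A
  sim_self : ∀ x : A, sim x x = ⊤
  bsim_self : ∀ x : A, bsim x x = ⊤
  sim_top : ∀ x : A, sim x ⊤ = x
  top_bsim : ∀ x : A, bsim ⊤ x = x
  A4a : ∀ x y z : A, x ≤ y → y ≤ z → sim x z ≤ sim y z
  A4b : ∀ x y z : A, x ≤ y → y ≤ z → sim x z ≤ sim x y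
  A4c : ∀ x y z : A, x ≤ y → y ≤ z → bsim z x ≤ bsim z y
  A4d : ∀ x y z : A, x ≤ y → y ≤ z → bsim z x ≤ bsim y x
  A5a : ∀ x y z : A, sim x y ≤ sim (x ⊓ z) (y ⊓ z)
  A5b : ∀ x y z : A, bsim x y ≤ bsim (x ⊓ z) (y ⊓ z)
  A6a : ∀ x y z : A, sim x y ≤ bsim (sim z x) (sim z y)
  A6b : ∀ x y z : A, bsim x y ≤ sim (bsim x z) (bsim y z)
  A7a : ∀ x y z : A, sim x y ≤ sim (sim x z) (sim y z)
  A7b : ∀ x y z : A, bsim x y ≤ bsim (bsim z x) (bsim z y)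

open PseudoEqualityAlgebra

/-- An internal state of type I on a pseudo equality algebra:
axioms (IS1), (IS2), (IS3), (IS4). -/
def IsInternalStateI {A : Type*} [PseudoEqualityAlgebra A] (σ : A → A) : Prop :=
  (∀ x y : A, x ≤ y → σ x ≤ σ y) ∧
  (∀ x y : A,
    σ (sim (x ⊓ y) x) = sim (σ y) (σ (bsim (sim (x ⊓ y) x) y)) ∧
    σ (bsim x (x ⊓ y)) = bsim (σ (sim y (bsim x (x ⊓ y)))) (σ y)) ∧
  (∀ x y : A,
    σ (sim (σ x) (σ y)) = sim (σ x) (σ y) ∧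
    σ (bsim (σ x) (σ y)) = bsim (σ x) (σ y)) ∧
  (∀ x y : A, σ (σ x ⊓ σ y) = σ x ⊓ σ y)

/-- An internal state of type II on a pseudo equality algebra:
axioms (IS1), (IS2'), (IS3), (IS4). -/
def IsInternalStateII {A : Type*} [PseudoEqualityAlgebra A] (σ : A → A) : Prop :=
  (∀ x y : A, x ≤ y → σ x ≤ σ y) ∧
  (∀ x y : A,
    σ (sim (x ⊓ y) x) = sim (σ y) (σ (bsim (sim (x ⊓ y) y) x)) ∧
    σ (bsim x (x ⊓ y)) = bsim (σ (sim x (bsim y (x ⊓ y)))) (σ y)) ∧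
  (∀ x y : A,
    σ (sim (σ x) (σ y)) = sim (σ x) (σ y) ∧
    σ (bsim (σ x) (σ y)) = bsim (σ x) (σ y)) ∧
  (∀ x y : A, σ (σ x ⊓ σ y) = σ x ⊓ σ y)

namespace PseudoEqualityAlgebra

variable {A : Type*} [PseudoEqualityAlgebra A]

theorem le_sim_bsim (y z : A) : y ≤ sim z (bsim y z) := by
  simpa only [top_bsim] using A6b ⊤ y z

theorem le_bsim_sim (x z : A) : x ≤ bsim (sim z x) z := by
  simpa only [sim_top] using A6a x ⊤ z

theorem le_sim_inf_left (x y : A) : y ≤ sim (x ⊓ y) x := by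
  simpa only [sim_top, top_inf_eq, inf_comm y] using A5a y ⊤ x

theorem le_bsim_inf_left (x y : A) : y ≤ bsim x (x ⊓ y) := by
  simpa only [top_bsim, top_inf_eq, inf_comm y] using A5b ⊤ y x

theorem sim_inf_left_eq (x y : A) :
    sim (x ⊓ y) x = sim y (bsim (sim (x ⊓ y) x) y) := by
  set a := sim (x ⊓ y) x
  have hxa : x ≤ bsim a y :=
    (le_bsim_sim x (x ⊓ y)).trans (A4c _ _ _ inf_le_right (le_sim_inf_left x y))
  refine le_antisymm (le_sim_bsim a y) ?_
  simpa only [inf_comm y x, inf_eq_right.mpr hxa] using A5a y (bsim a y) x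

theorem bsim_inf_left_eq (x y : A) :
    bsim x (x ⊓ y) = bsim (sim y (bsim x (x ⊓ y))) y := by
  set b := bsim x (x ⊓ y)
  have hxb : x ≤ sim y b :=
    (le_sim_bsim x (x ⊓ y)).trans (A4a _ _ _ inf_le_right (le_bsim_inf_left x y))
  refine le_antisymm (le_bsim_sim b y) ?_
  simpa only [inf_comm y x, inf_eq_right.mpr hxb] using A5b (sim y b) y x

end PseudoEqualityAlgebra

/-- Theorem 7.6: every state-morphism operator on a pseudo equality algebra `A` is an
internal state of type I on `A`. -/
theorem stmt18 {A : Type*} [PseudoEqualityAlgebra A] (σ : A → A)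
    (hSM1 : ∀ x y : A, σ (sim x y) = sim (σ x) (σ y))
    (hSM2 : ∀ x y : A, σ (bsim x y) = bsim (σ x) (σ y))
    (hSM3 : ∀ x y : A, σ (x ⊓ y) = σ x ⊓ σ y)
    (hSM4 : ∀ x : A, σ (σ x) = σ x) :
    IsInternalStateI σ := by
  refine ⟨fun _ _ h ↦ Monotone.of_map_inf hSM3 h, fun x y ↦ ⟨?_, ?_⟩,
    fun x y ↦ ⟨by rw [hSM1, hSM4, hSM4], by rw [hSM2, hSM4, hSM4]⟩,
    fun x y ↦ by rw [hSM3, hSM4, hSM4]⟩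
  · exact (congrArg σ (sim_inf_left_eq x y)).trans (hSM1 _ _)
  · exact (congrArg σ (bsim_inf_left_eq x y)).trans (hSM2 _ _)
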